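/- Let F be the field with two elements and R = F[X₁,X₂]/(X₁²,X₂²). The R-modules R/(X₁+X₂) and the mapping cone of the R-linear map R → R/(X₁+X₂) sending 1 to 1 (viewed as a two-term chain complex) are quasi-isomorphic as R-chain complexes, but there is no R-linear chain map from the mapping cone to R/(X₁+X₂) (concentrated in degree 0) that is a quasi-isomorphism. -/
import Mathlib

/-!
STATEMENT 0: Over F = ℤ/2ℤ, let R = F[X₁,X₂]/(X₁²,X₂²) and M = R/(X₁+X₂).
The complex M (concentrated in degree 0) and the mapping cone of f : R → M, f(1)=1
(the two-term complex R → M) are quasi-isomorphic as R-chain complexes, but there is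
no R-linear chain map from the cone to M concentrated in degree 0 that is a
quasi-isomorphism.

A chain map M → Cone in degree 0 is an R-linear h : M → R with f ∘ h = 0; it is a
quasi-isomorphism iff it maps M isomorphically onto H(Cone) = ker f.  A chain map
Cone → M is an R-linear g : R → M (with no further condition, since the differential
of the target vanishes); it is a quasi-isomorphism iff its restriction to
H(Cone) = ker f is bijective onto M = H(M).
-/

set_option synthInstance.maxHeartbeats 1000000
set_option maxHeartbeats 1000000

noncomputable section

abbrev F2 := ZMod 2

/-- `R₂ = F[X₁,X₂]/(X₁²,X₂²)`. -/
abbrev Rtwo : Type :=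
  MvPolynomial (Fin 2) F2 ⧸
    Ideal.span {(MvPolynomial.X 0 : MvPolynomial (Fin 2) F2) ^ 2, (MvPolynomial.X 1) ^ 2}

/-- `X₁ + X₂` in `R₂`. -/
def sR : Rtwo := Ideal.Quotient.mk _ (MvPolynomial.X 0 + MvPolynomial.X 1)

/-- `M = R₂/(X₁+X₂)`, as an `R₂`-module. -/
abbrev Mquot : Type := Rtwo ⧸ (Ideal.span {sR} : Ideal Rtwo)

/-- The map `f : R₂ → M`, `f(1) = 1`, whose mapping cone is the second complex. -/
def fq : Rtwo →ₗ[Rtwo] Mquot := (Ideal.span {sR} : Ideal Rtwo).mkQ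

open MvPolynomial

abbrev Ppoly := MvPolynomial (Fin 2) F2
abbrev Ipoly : Ideal Ppoly := Ideal.span {(X 0 : Ppoly) ^ 2, (X 1) ^ 2}

lemma sR_sq : sR * sR = 0 := by
  show Ideal.Quotient.mk _ _ * Ideal.Quotient.mk _ _ = 0
  rw [← map_mul, Ideal.Quotient.eq_zero_iff_mem]
  have : (X 0 + X 1 : Ppoly) * (X 0 + X 1) = X 0 ^ 2 + X 1 ^ 2 + 2 * (X 0 * X 1) := by ring
  rw [this]
  have h2 : (2 : Ppoly) = 0 := by
    have : (2 : F2) = 0 := by decide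
    rw [← map_ofNat (C : F2 →+* Ppoly) 2, this, map_zero]
  rw [h2, zero_mul, add_zero]
  exact Ideal.add_mem _ (Ideal.subset_span (by simp)) (Ideal.subset_span (by simp))

lemma one_ne_zero_Rtwo : (1 : Rtwo) ≠ 0 := by
  intro h
  have h1 : (1 : Ppoly) ∈ Ipoly := by
    rwa [show (1 : Rtwo) = Ideal.Quotient.mk _ 1 from rfl,
      Ideal.Quotient.eq_zero_iff_mem] at h
  have hle : Ipoly ≤ RingHom.ker (eval (fun _ => (0 : F2))) := by
    rw [Ideal.span_le]
    rintro p hp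
    simp only [Set.mem_insert_iff, Set.mem_singleton_iff] at hp
    rcases hp with rfl | rfl <;> simp [RingHom.mem_ker]
  have := hle h1
  simp [RingHom.mem_ker] at this

def e0 : Fin 2 →₀ ℕ := Finsupp.single 0 1
def e1 : Fin 2 →₀ ℕ := Finsupp.single 1 1

lemma key (a : Ppoly) (h : a * (X 0 + X 1) ∈ Ipoly) :
    Ideal.Quotient.mk _ a ∈ Ideal.span ({sR} : Set Rtwo) := by
  classical
  -- rewrite Ipoly as a monomial ideal
  have hI : Ipoly = Ideal.span ((fun s => monomial s (1:F2)) ''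
      {Finsupp.single 0 2, Finsupp.single 1 2}) := by
    rw [Set.image_insert_eq, Set.image_singleton, ← X_pow_eq_monomial, ← X_pow_eq_monomial]
  rw [hI] at h
  have h' := mem_ideal_span_monomial_image.mp h
  have hv : ∀ m : Fin 2 →₀ ℕ, m 0 < 2 → m 1 < 2 → coeff m (a * (X 0 + X 1)) = 0 := by
    intro m hm0 hm1
    by_contra hne
    obtain ⟨si, hsi, hle⟩ := h' m (mem_support_iff.2 hne)
    simp only [Set.mem_insert_iff, Set.mem_singleton_iff] at hsi
    rcases hsi with rfl | rfl
    · exact absurd (Finsupp.single_le_iff.mp hle) (by omega)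
    · exact absurd (Finsupp.single_le_iff.mp hle) (by omega)
  have flip : ∀ u v : F2, u + v = 0 → u = v := by decide
  -- coeff 0 a = 0
  have h00 : coeff 0 a = 0 := by
    have := hv e0 (by simp [e0]) (by simp [e0, Finsupp.single_apply])
    rw [mul_add, coeff_add, show e0 = 0 + Finsupp.single 0 1 from (zero_add _).symm,
      coeff_mul_X] at this
    rw [coeff_mul_X'] at this
    simp [Finsupp.single_apply] at this
    exact this
  -- coeff e0 a = coeff e1 a
  have hc : coeff e0 a = coeff e1 a := by
    have := hv (e0 + e1) (by simp [e0, e1, Finsupp.single_apply])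
      (by simp [e0, e1, Finsupp.single_apply])
    rw [mul_add, coeff_add, show e0 + e1 = e1 + Finsupp.single 0 1 from add_comm _ _] at this
    rw [coeff_mul_X] at this
    rw [show e1 + Finsupp.single 0 1 = e0 + Finsupp.single 1 1 from add_comm _ _,
      coeff_mul_X] at this
    exact (flip _ _ this).symm
  set c := coeff e1 a with hcdef
  set p := a - C c * (X 0 + X 1) with hpdef
  have ha : a = C c * (X 0 + X 1) + p := by rw [hpdef]; ring
  have hp0 : coeff 0 p = 0 := by
    simp [hpdef, coeff_X', h00, Finsupp.single_eq_zero]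
  have hpe0 : coeff e0 p = 0 := by
    simp [hpdef, coeff_X', e0, e1, Finsupp.single_eq_single_iff]
    exact sub_eq_zero.mpr hc
  have hpe1 : coeff e1 p = 0 := by
    simp [hpdef, coeff_X', e0, e1, Finsupp.single_eq_single_iff]
    exact sub_eq_zero.mpr hcdef.symm
  -- p lies in the monomial ideal (X0², X1², X0X1)
  have hxy : (X 0 * X 1 : Ppoly) = monomial (e0 + e1) 1 := by
    rw [X, X, monomial_mul, one_mul]; rfl
  have hpK : p ∈ Ideal.span ({(X 0 : Ppoly)^2, X 1^2, X 0 * X 1} : Set Ppoly) := by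
    have hK : ({(X 0 : Ppoly)^2, X 1^2, X 0 * X 1} : Set Ppoly) =
        (fun s => monomial s (1:F2)) '' {Finsupp.single 0 2, Finsupp.single 1 2, e0 + e1} := by
      rw [Set.image_insert_eq, Set.image_insert_eq, Set.image_singleton]
      simp [X_pow_eq_monomial, hxy]
    rw [hK, mem_ideal_span_monomial_image]
    intro m hm
    have hmne := mem_support_iff.mp hm
    by_cases h20 : 2 ≤ m 0
    · exact ⟨Finsupp.single 0 2, by simp, Finsupp.single_le_iff.2 h20⟩
    by_cases h02 : 2 ≤ m 1
    · exact ⟨Finsupp.single 1 2, by simp, Finsupp.single_le_iff.2 h02⟩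
    by_cases h11 : m 0 = 1 ∧ m 1 = 1
    · refine ⟨e0 + e1, by simp, ?_⟩
      rw [Finsupp.le_def]
      intro i
      fin_cases i <;> simp [e0, e1, Finsupp.single_apply, h11.1, h11.2]
    · exfalso
      have hm0 : m 0 = 0 ∨ m 0 = 1 := by omega
      have hm1 : m 1 = 0 ∨ m 1 = 1 := by omega
      have hext : ∀ v0 v1 : ℕ, m 0 = v0 → m 1 = v1 →
          m = Finsupp.single 0 v0 + Finsupp.single 1 v1 := by
        intro v0 v1 h0 h1
        ext i
        fin_cases i <;> simp [Finsupp.single_apply, h0, h1]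
      rcases hm0 with h0 | h0 <;> rcases hm1 with h1 | h1
      · have := hext 0 0 h0 h1
        simp at this
        exact hmne (this ▸ hp0)
      · have := hext 0 1 h0 h1
        simp [e1] at this
        exact hmne (by rw [this]; exact hpe1)
      · have := hext 1 0 h0 h1
        simp [e0] at this
        exact hmne (by rw [this]; exact hpe0)
      · exact h11 ⟨h0, h1⟩
  -- decompose p
  rw [show ({(X 0 : Ppoly)^2, X 1^2, X 0 * X 1} : Set Ppoly) =
      insert ((X 0 : Ppoly)^2) {X 1^2, X 0 * X 1} from rfl,
    Ideal.span, Submodule.mem_span_insert] at hpK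
  obtain ⟨u, q1, hq1, hp⟩ := hpK
  rw [← Ideal.span, Ideal.mem_span_pair] at hq1
  obtain ⟨v, w, hq⟩ := hq1
  -- conclude
  have hdiff : a - (C c + w * X 0) * (X 0 + X 1) = (u - w) * X 0^2 + v * X 1^2 := by
    rw [ha, hp, ← hq, smul_eq_mul]; ring
  have hmem : a - (C c + w * X 0) * (X 0 + X 1) ∈ Ipoly := by
    rw [hdiff]
    exact Ideal.add_mem _ (Ideal.mul_mem_left _ _ (Ideal.subset_span (by simp)))
      (Ideal.mul_mem_left _ _ (Ideal.subset_span (by simp)))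
  rw [Ideal.mem_span_singleton']
  refine ⟨Ideal.Quotient.mk _ (C c + w * X 0), ?_⟩
  rw [sR, ← map_mul]
  exact (Ideal.Quotient.eq.2 hmem).symm

/-- The chain map `M → Cone`, multiplication by `sR`. -/
def hmap : Mquot →ₗ[Rtwo] Rtwo :=
  Submodule.liftQ _ (LinearMap.toSpanSingleton Rtwo Rtwo sR) (by
    show Submodule.span Rtwo {sR} ≤ _
    rw [Submodule.span_le]
    rintro x rfl
    simp only [SetLike.mem_coe, LinearMap.mem_ker, LinearMap.toSpanSingleton_apply,
      smul_eq_mul]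
    exact sR_sq)

theorem stmt0 :
    -- the two complexes are quasi-isomorphic: there is a chain map from M
    -- (concentrated in degree 0) to the cone inducing an isomorphism on homology
    (∃ h : Mquot →ₗ[Rtwo] Rtwo,
      fq.comp h = 0 ∧ Function.Injective h ∧ LinearMap.range h = LinearMap.ker fq) ∧
    -- but no chain map from the cone to M is a quasi-isomorphism
    ¬ ∃ g : Rtwo →ₗ[Rtwo] Mquot,
        Function.Bijective (fun z : LinearMap.ker fq => g (z : Rtwo)) := by
  constructor
  · refine ⟨hmap, ?_, ?_, ?_⟩
    · -- fq ∘ hmap = 0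
      refine Submodule.linearMap_qext _ (LinearMap.ext fun x => ?_)
      simp only [LinearMap.comp_apply, Submodule.mkQ_apply, LinearMap.zero_apply]
      show fq (hmap (Submodule.Quotient.mk x)) = 0
      rw [hmap, Submodule.liftQ_apply, LinearMap.toSpanSingleton_apply, smul_eq_mul]
      show Submodule.Quotient.mk (x * sR) = 0
      rw [Submodule.Quotient.mk_eq_zero]
      exact Ideal.mem_span_singleton'.mpr ⟨x, rfl⟩
    · -- injectivity
      rw [← LinearMap.ker_eq_bot, eq_bot_iff]
      rintro m hm
      obtain ⟨b, rfl⟩ := Submodule.Quotient.mk_surjective _ m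
      obtain ⟨aP, rfl⟩ := Ideal.Quotient.mk_surjective b
      simp only [LinearMap.mem_ker] at hm
      rw [hmap, Submodule.liftQ_apply, LinearMap.toSpanSingleton_apply, smul_eq_mul] at hm
      have hmem : aP * (X 0 + X 1) ∈ Ipoly := by
        rw [← Ideal.Quotient.eq_zero_iff_mem, map_mul]
        exact hm
      rw [Submodule.mem_bot, Submodule.Quotient.mk_eq_zero]
      exact key aP hmem
    · -- range hmap = ker fq
      rw [fq, Submodule.ker_mkQ, hmap, Submodule.range_liftQ]
      exact (LinearMap.span_singleton_eq_range Rtwo Rtwo sR).symm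
  · rintro ⟨g, hg⟩
    have hzero : ∀ z : LinearMap.ker fq, g (z : Rtwo) = 0 := by
      rintro ⟨z, hz⟩
      have hz' : z ∈ Ideal.span ({sR} : Set Rtwo) := by
        rwa [fq, Submodule.ker_mkQ] at hz
      obtain ⟨w, rfl⟩ := Ideal.mem_span_singleton'.mp hz'
      show g (w * sR) = 0
      rw [show w * sR = w • sR from rfl, map_smul]
      suffices hs : g sR = 0 by rw [hs, smul_zero]
      have h1 : g sR = sR • g 1 := by rw [← map_smul, smul_eq_mul, mul_one]
      rw [h1]
      obtain ⟨b, hb⟩ := Submodule.Quotient.mk_surjective _ (g 1)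
      rw [← hb, ← Submodule.Quotient.mk_smul, Submodule.Quotient.mk_eq_zero, smul_eq_mul]
      exact Ideal.mul_mem_right b _ (Ideal.subset_span rfl)
    obtain ⟨z, hz1⟩ := hg.2 (Submodule.Quotient.mk 1)
    have hz1' : g (z : Rtwo) = Submodule.Quotient.mk 1 := hz1
    rw [hzero z] at hz1'
    have h1 : (1 : Rtwo) ∈ Ideal.span ({sR} : Set Rtwo) := by
      rw [← Submodule.Quotient.mk_eq_zero]
      exact hz1'.symm
    obtain ⟨w, hw⟩ := Ideal.mem_span_singleton'.mp h1
    have : (1 : Rtwo) = 0 := by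
      calc (1 : Rtwo) = (w * sR) * (w * sR) := by rw [hw, one_mul]
        _ = w * w * (sR * sR) := by ring
        _ = 0 := by rw [sR_sq, mul_zero]
    exact one_ne_zero_Rtwo this
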